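/- For any α > 0, any δ with 0 < δ < e, and any complex η with Re(η) > 0, one has ∫₀^δ r^α e^{−ηr} dr = Γ(α+1)/η^{α+1} − ∫_δ^∞ r^α e^{−ηr} dr. Moreover, if Re(η) ≥ 2α/e, then |∫_δ^∞ r^α e^{−ηr} dr| ≤ (2/Re η) · e^{−(δ/2) Re η}. -/

import Mathlib

open MeasureTheory Real Filter Matrix
open scoped Topology

noncomputable section

abbrev V3 := Fin 3 → ℝ
abbrev C3 := Fin 3 → ℂ

/-- bilinear dot product on `ℝ³`. -/
def dotR (u v : V3) : ℝ := ∑ i, u i * v i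
/-- bilinear (non-conjugated) dot product on `ℂ³`. -/
def dotC (u v : C3) : ℂ := ∑ i, u i * v i
/-- componentwise embedding `ℝ³ → ℂ³`. -/
def cst (v : V3) : C3 := fun i => (v i : ℂ)
/-- Euclidean norm on `ℝ³` (as a plain pi type). -/
def enorm3 (x : V3) : ℝ := Real.sqrt (∑ i, x i ^ 2)
/-- Euclidean norm on `ℂ³`. -/
def cnorm3 (u : C3) : ℝ := Real.sqrt (∑ i, ‖u i‖ ^ 2)

/-- the infinite open cone about the axis `e₃` with half-opening angle `θ₀`. -/
def coneK (θ₀ : ℝ) : Set V3 := {x | 0 < enorm3 x ∧ x 2 > Real.cos θ₀ * enorm3 x}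
/-- the truncated cone of radius `r₀` about the axis `e₃` with half-opening angle `θ₀`. -/
def coneKtr (θ₀ r₀ : ℝ) : Set V3 :=
  {x | 0 < enorm3 x ∧ enorm3 x < r₀ ∧ x 2 > Real.cos θ₀ * enorm3 x}

/-- the CGO direction `d = -e₃`. -/
def dvec : V3 := ![0, 0, -1]
/-- the orthogonal direction `d⊥ = (cos φ, sin φ, 0)`. -/
def dperp (φ : ℝ) : V3 := ![Real.cos φ, Real.sin φ, 0]
/-- the CGO phase vector `ρ = τ d + i √(τ²+k²) d⊥`. -/
def rhovec (k τ φ : ℝ) : C3 :=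
  fun i => (τ : ℂ) * (dvec i : ℂ) + Complex.I * (Real.sqrt (τ ^ 2 + k ^ 2) : ℂ) * (dperp φ i : ℂ)
/-- the CGO amplitude vector `p = d⊥ - i √(1+k²/τ²) d`. -/
def pvec (k τ φ : ℝ) : C3 :=
  fun i => (dperp φ i : ℂ) - Complex.I * (Real.sqrt (1 + k ^ 2 / τ ^ 2) : ℂ) * (dvec i : ℂ)
/-- the CGO solution `V(x) = p e^{ρ·x}`. -/
def Vcgo (k τ φ : ℝ) (x : V3) : C3 :=
  fun i => pvec k τ φ i * Complex.exp (dotC (rhovec k τ φ) (cst x))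
/-- the CGO solution `W(x) = (1/(iωμ₀)) (ρ × p) e^{ρ·x}`. -/
def Wcgo (ω μ₀ k τ φ : ℝ) (x : V3) : C3 :=
  fun i => (1 / (Complex.I * ω * μ₀)) * (rhovec k τ φ ⨯₃ pvec k τ φ) i *
    Complex.exp (dotC (rhovec k τ φ) (cst x))

/-- partial derivative in direction `e_j` of a scalar field. -/
def pdC (j : Fin 3) (f : V3 → ℂ) (x : V3) : ℂ := fderiv ℝ f x (Pi.single j 1)
/-- the curl of a `ℂ³`-valued field on `ℝ³`, componentwise via `fderiv`. -/
def curl3 (F : V3 → C3) (x : V3) : C3 :=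
  ![pdC 1 (fun y => F y 2) x - pdC 2 (fun y => F y 1) x,
    pdC 2 (fun y => F y 0) x - pdC 0 (fun y => F y 2) x,
    pdC 0 (fun y => F y 1) x - pdC 1 (fun y => F y 0) x]

/-- electric Herglotz wave function with kernel `g` w.r.t. a surface measure `μS` on `S²`. -/
def Herg (μS : Measure V3) (k₁ : ℝ) (g : V3 → C3) (x : V3) : C3 :=
  fun i => ∫ d, g d i * Complex.exp (Complex.I * (k₁ : ℂ) * (dotR x d : ℂ)) ∂μS

/-- the `H(curl)` norm on a set `Ω`. -/
def HcurlNorm (Ω : Set V3) (F : V3 → C3) : ℝ :=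
  Real.sqrt ((∫ x in Ω, cnorm3 (F x) ^ 2) + ∫ x in Ω, cnorm3 (curl3 F x) ^ 2)

/-!
For real `η = x > 0` the substitution `t = x r` turns `∫₀^∞ r^α e^{-ηr} dr` into
`Γ(α+1) / x^{α+1}`. Both sides are holomorphic in `η` on the right half-plane (the integral by
differentiation under the integral sign), so the identity theorem extends the formula to all
`Re η > 0`, and subtracting the tail over `(δ, ∞)` gives the first claim. For the tail bound,
`log r ≤ r / e` gives `r^α ≤ e^{αr/e} ≤ e^{r Re η / 2}` once `Re η ≥ 2α/e`, so the tail is dominated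
by `∫_δ^∞ e^{-r Re η / 2} dr = (2 / Re η) e^{-δ Re η / 2}`.
-/

section
variable (a : ℝ) (η : ℂ)

lemma norm_ofReal_rpow_mul_cexp_neg_mul {r : ℝ} (hr : 0 ≤ r) :
    ‖((r ^ a : ℝ) : ℂ) * Complex.exp (-η * r)‖ = r ^ a * Real.exp (-η.re * r) := by
  rw [norm_mul, Complex.norm_exp, Complex.norm_real, Real.norm_of_nonneg (Real.rpow_nonneg hr _)]
  simp [Complex.mul_re]

lemma continuousOn_ofReal_rpow_mul_cexp_neg_mul :
    ContinuousOn (fun r : ℝ => ((r ^ a : ℝ) : ℂ) * Complex.exp (-η * r)) (Set.Ioi 0) := by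
  refine ContinuousOn.mul ?_ (by fun_prop)
  exact Complex.continuous_ofReal.comp_continuousOn
    (continuousOn_id.rpow_const fun r hr => Or.inl (ne_of_gt hr))

variable {a η}

lemma integrableOn_ofReal_rpow_mul_cexp_neg_mul_Ioi (ha : -1 < a) (hη : 0 < η.re) :
    IntegrableOn (fun r : ℝ => ((r ^ a : ℝ) : ℂ) * Complex.exp (-η * r)) (Set.Ioi 0) := by
  have hbound : IntegrableOn (fun r : ℝ => r ^ a * Real.exp (-η.re * r)) (Set.Ioi 0) := by
    simpa using integrableOn_rpow_mul_exp_neg_mul_rpow ha one_pos hη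
  refine Integrable.mono' hbound
    ((continuousOn_ofReal_rpow_mul_cexp_neg_mul a η).aestronglyMeasurable measurableSet_Ioi) ?_
  filter_upwards [ae_restrict_mem measurableSet_Ioi] with r hr
  exact (norm_ofReal_rpow_mul_cexp_neg_mul a η (le_of_lt hr)).le

lemma integral_ofReal_rpow_mul_cexp_neg_mul_ofReal_Ioi (ha : -1 < a) {x : ℝ} (hx : 0 < x) :
    ∫ r in Set.Ioi (0:ℝ), ((r ^ a : ℝ) : ℂ) * Complex.exp (-(x:ℂ) * r) =
      Complex.Gamma ((a : ℂ) + 1) / (x:ℂ) ^ ((a : ℂ) + 1) := by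
  have hre : 0 < ((a:ℂ) + 1).re := by
    rw [Complex.add_re, Complex.ofReal_re, Complex.one_re]; linarith
  have hcpow : ∀ r ∈ Set.Ioi (0:ℝ), ((r ^ a : ℝ) : ℂ) * Complex.exp (-(x:ℂ) * r)
      = (r:ℂ) ^ ((a:ℂ) + 1 - 1) * Complex.exp (-((x:ℝ) * r)) := fun r hr => by
    rw [add_sub_cancel_right, ← Complex.ofReal_cpow (le_of_lt hr), neg_mul]
  have harg : (x:ℂ).arg ≠ π := by
    rw [Complex.arg_ofReal_of_nonneg hx.le]; exact Real.pi_ne_zero.symm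
  rw [setIntegral_congr_fun measurableSet_Ioi hcpow,
    Complex.integral_cpow_mul_exp_neg_mul_Ioi hre hx, one_div, Complex.inv_cpow _ _ harg,
    div_eq_inv_mul]

end

lemma hasDerivAt_ofReal_rpow_mul_cexp_neg_mul (a r : ℝ) (z : ℂ) :
    HasDerivAt (fun w : ℂ => ((r ^ a : ℝ) : ℂ) * Complex.exp (-w * r))
      (-(r:ℂ) * (((r ^ a : ℝ) : ℂ) * Complex.exp (-z * r))) z := by
  have hlin : HasDerivAt (fun w : ℂ => -w * r) (-(r:ℂ)) z := by
    simpa using ((hasDerivAt_id z).neg.mul_const (r:ℂ))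
  exact ((hlin.cexp).const_mul (((r ^ a : ℝ) : ℂ))).congr_deriv (by ring)

lemma differentiableOn_integral_ofReal_rpow_mul_cexp_neg_mul_Ioi {a : ℝ} (ha : -1 < a) :
    DifferentiableOn ℂ
      (fun η : ℂ => ∫ r in Set.Ioi (0:ℝ), ((r ^ a : ℝ) : ℂ) * Complex.exp (-η * r))
      {η | 0 < η.re} := by
  intro z₀ (hz₀ : 0 < z₀.re)
  have hnhds : {z : ℂ | z₀.re / 2 < z.re} ∈ 𝓝 z₀ :=
    (isOpen_lt continuous_const Complex.continuous_re).mem_nhds (show z₀.re / 2 < z₀.re by linarith)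
  have hbound : ∀ᵐ r : ℝ ∂(volume.restrict (Set.Ioi (0:ℝ))), ∀ z ∈ {z : ℂ | z₀.re / 2 < z.re},
      ‖-(r:ℂ) * (((r ^ a : ℝ) : ℂ) * Complex.exp (-z * r))‖ ≤
        r ^ (a + 1) * Real.exp (-(z₀.re / 2) * r) := by
    filter_upwards [ae_restrict_mem measurableSet_Ioi] with r (hr : 0 < r) z (hz : z₀.re / 2 < z.re)
    rw [norm_mul, norm_ofReal_rpow_mul_cexp_neg_mul a z hr.le, norm_neg, Complex.norm_real,
      Real.norm_of_nonneg hr.le, Real.rpow_add hr, Real.rpow_one, ← mul_assoc, mul_comm r (r ^ a)]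
    gcongr
  have hdom :
      IntegrableOn (fun r : ℝ => r ^ (a + 1) * Real.exp (-(z₀.re / 2) * r)) (Set.Ioi 0) := by
    simpa using integrableOn_rpow_mul_exp_neg_mul_rpow (by linarith) one_pos (half_pos hz₀)
  have hderiv := hasDerivAt_integral_of_dominated_loc_of_deriv_le hnhds
    (Eventually.of_forall fun z =>
      (continuousOn_ofReal_rpow_mul_cexp_neg_mul a z).aestronglyMeasurable measurableSet_Ioi)
    (integrableOn_ofReal_rpow_mul_cexp_neg_mul_Ioi ha hz₀)
    ((Complex.continuous_ofReal.neg.continuousOn.mul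
      (continuousOn_ofReal_rpow_mul_cexp_neg_mul a z₀)).aestronglyMeasurable measurableSet_Ioi)
    hbound hdom
    (Eventually.of_forall fun r z _ => hasDerivAt_ofReal_rpow_mul_cexp_neg_mul a r z)
  exact hderiv.2.differentiableAt.differentiableWithinAt

lemma differentiableOn_Gamma_div_cpow (s : ℂ) :
    DifferentiableOn ℂ (fun η : ℂ => Complex.Gamma s / η ^ s) {η | 0 < η.re} := by
  intro z (hz : 0 < z.re)
  have hz0 : z ≠ 0 := fun h => by simp [h] at hz
  exact ((differentiableAt_const _).div (differentiableAt_id.cpow (differentiableAt_const _)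
    (Or.inl hz)) (by simp [Complex.cpow_eq_zero_iff, hz0])).differentiableWithinAt

theorem integral_ofReal_rpow_mul_cexp_neg_mul_Ioi {a : ℝ} (ha : -1 < a) {η : ℂ} (hη : 0 < η.re) :
    ∫ r in Set.Ioi (0:ℝ), ((r ^ a : ℝ) : ℂ) * Complex.exp (-η * r) =
      Complex.Gamma ((a : ℂ) + 1) / η ^ ((a : ℂ) + 1) := by
  have hU : IsOpen {η : ℂ | 0 < η.re} := isOpen_lt continuous_const Complex.continuous_re
  have hreal : ∃ᶠ x : ℝ in 𝓝[≠] 1,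
      ∫ r in Set.Ioi (0:ℝ), ((r ^ a : ℝ) : ℂ) * Complex.exp (-(x:ℂ) * r) =
        Complex.Gamma ((a : ℂ) + 1) / (x:ℂ) ^ ((a : ℂ) + 1) :=
    (eventually_nhdsWithin_of_eventually_nhds (lt_mem_nhds one_pos)).frequently.mono
      fun x hx => integral_ofReal_rpow_mul_cexp_neg_mul_ofReal_Ioi ha hx
  have hofReal : Tendsto (fun x : ℝ => (x:ℂ)) (𝓝[≠] 1) (𝓝[≠] (1:ℂ)) :=
    Complex.continuous_ofReal.continuousWithinAt.tendsto_nhdsWithin fun _ _ => by simp_all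
  exact ((differentiableOn_integral_ofReal_rpow_mul_cexp_neg_mul_Ioi ha).analyticOnNhd hU
    |>.eqOn_of_preconnected_of_frequently_eq ((differentiableOn_Gamma_div_cpow _).analyticOnNhd hU)
      (convex_halfSpace_re_gt 0).isPreconnected (by simp) (hofReal.frequently hreal)) hη

lemma rpow_le_exp_mul_div_exp_one {a r : ℝ} (ha : 0 ≤ a) (hr : 0 < r) :
    r ^ a ≤ Real.exp (a * r / Real.exp 1) := by
  have hlog : Real.log r ≤ r / Real.exp 1 := by
    have h := Real.log_le_sub_one_of_pos (div_pos hr (Real.exp_pos 1))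
    rw [Real.log_div hr.ne' (Real.exp_ne_zero 1), Real.log_exp] at h
    linarith
  rw [Real.rpow_def_of_pos hr, Real.exp_le_exp, mul_comm, mul_div_assoc]
  exact mul_le_mul_of_nonneg_left hlog ha

lemma rpow_mul_exp_neg_mul_le {a b r : ℝ} (ha : 0 ≤ a) (hb : 2 * a / Real.exp 1 ≤ b) (hr : 0 < r) :
    r ^ a * Real.exp (-b * r) ≤ Real.exp (-(b / 2) * r) := by
  have hexp : a * r / Real.exp 1 ≤ b / 2 * r := by
    rw [div_le_iff₀ (Real.exp_pos 1)] at hb ⊢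
    nlinarith
  calc r ^ a * Real.exp (-b * r) ≤ Real.exp (b / 2 * r) * Real.exp (-b * r) := by
        gcongr
        exact (rpow_le_exp_mul_div_exp_one ha hr).trans (Real.exp_le_exp.mpr hexp)
    _ = Real.exp (-(b / 2) * r) := by rw [← Real.exp_add]; ring_nf

lemma norm_setIntegral_Ioi_ofReal_rpow_mul_cexp_neg_mul_le {a δ : ℝ} (ha : 0 ≤ a) (hδ : 0 ≤ δ)
    {η : ℂ} (hη : 0 < η.re) (hηa : 2 * a / Real.exp 1 ≤ η.re) :
    ‖∫ r in Set.Ioi δ, ((r ^ a : ℝ) : ℂ) * Complex.exp (-η * r)‖ ≤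
      2 / η.re * Real.exp (-(δ / 2) * η.re) := by
  have hdom : IntegrableOn (fun r : ℝ => Real.exp (-(η.re / 2) * r)) (Set.Ioi δ) :=
    exp_neg_integrableOn_Ioi δ (half_pos hη)
  calc ‖∫ r in Set.Ioi δ, ((r ^ a : ℝ) : ℂ) * Complex.exp (-η * r)‖
      ≤ ∫ r in Set.Ioi δ, Real.exp (-(η.re / 2) * r) := by
        refine norm_integral_le_of_norm_le hdom ?_
        filter_upwards [ae_restrict_mem measurableSet_Ioi] with r (hr : δ < r)
        have hr0 : 0 < r := hδ.trans_lt hr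
        rw [norm_ofReal_rpow_mul_cexp_neg_mul a η hr0.le]
        exact rpow_mul_exp_neg_mul_le ha hηa hr0
    _ = 2 / η.re * Real.exp (-(δ / 2) * η.re) := by
        rw [integral_exp_mul_Ioi (by linarith) δ]
        field_simp

theorem stmt1_general (α δ : ℝ) (hα : 0 < α) (hδ : 0 < δ)
    (η : ℂ) (hη : 0 < η.re) :
    (∫ r in (0:ℝ)..δ, ((r ^ α : ℝ) : ℂ) * Complex.exp (-η * r)) =
      Complex.Gamma ((α : ℂ) + 1) / η ^ ((α : ℂ) + 1) -
        ∫ r in Set.Ioi δ, ((r ^ α : ℝ) : ℂ) * Complex.exp (-η * r) ∧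
    (η.re ≥ 2 * α / Real.exp 1 →
      ‖∫ r in Set.Ioi δ, ((r ^ α : ℝ) : ℂ) * Complex.exp (-η * r)‖ ≤
        2 / η.re * Real.exp (-(δ / 2) * η.re)) := by
  have hint := integrableOn_ofReal_rpow_mul_cexp_neg_mul_Ioi (by linarith : -1 < α) hη
  refine ⟨?_, norm_setIntegral_Ioi_ofReal_rpow_mul_cexp_neg_mul_le hα.le hδ.le hη⟩
  rw [← integral_ofReal_rpow_mul_cexp_neg_mul_Ioi (by linarith) hη,
    ← intervalIntegral.integral_interval_add_Ioi hint (hint.mono_set (Set.Ioi_subset_Ioi hδ.le)),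
    add_sub_cancel_right]

/-- for `α > 0`, `0 < δ < e`, `Re η > 0`:
`∫₀^δ r^α e^{−ηr} dr = Γ(α+1)/η^{α+1} − ∫_δ^∞ r^α e^{−ηr} dr`, and if moreover
`Re η ≥ 2α/e` then `|∫_δ^∞ r^α e^{−ηr} dr| ≤ (2/Re η) e^{−(δ/2) Re η}`. -/
theorem stmt1 (α δ : ℝ) (hα : 0 < α) (hδ : 0 < δ) (hδe : δ < Real.exp 1)
    (η : ℂ) (hη : 0 < η.re) :
    (∫ r in (0:ℝ)..δ, ((r ^ α : ℝ) : ℂ) * Complex.exp (-η * r)) =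
      Complex.Gamma ((α : ℂ) + 1) / η ^ ((α : ℂ) + 1) -
        ∫ r in Set.Ioi δ, ((r ^ α : ℝ) : ℂ) * Complex.exp (-η * r) ∧
    (η.re ≥ 2 * α / Real.exp 1 →
      ‖∫ r in Set.Ioi δ, ((r ^ α : ℝ) : ℂ) * Complex.exp (-η * r)‖ ≤
        2 / η.re * Real.exp (-(δ / 2) * η.re)) :=
  stmt1_general α δ hα hδ η hη
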